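/- Let n ≥ 3 and suppose a_n ≥ 2 and a_{n+1} = 1. Then q_n − q_{n-1} and 2q_{n-1} + q_n are two successive elements of 𝔔(α). -/

import Mathlib

open Filter Real Set

/-- Iterates of the Gauss map starting from `α`: `x₀ = α`, `x_{n+1} = 1 / fract (xₙ)`. -/
noncomputable def gaussIter (α : ℝ) : ℕ → ℝ
  | 0 => α
  | n + 1 => (Int.fract (gaussIter α n))⁻¹

/-- Partial quotients of the continued fraction `α = [a₀; a₁, a₂, …]`. -/
noncomputable def cfA (α : ℝ) (n : ℕ) : ℤ := ⌊gaussIter α n⌋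

/-- Denominators of convergents, with shifted index: `cfQ α 0 = q₋₁ = 0`,
`cfQ α 1 = q₀ = 1`, and `cfQ α (n+1) = qₙ` where `qₙ = aₙ q_{n-1} + q_{n-2}`. -/
noncomputable def cfQ (α : ℝ) : ℕ → ℤ
  | 0 => 0
  | 1 => 1
  | n + 2 => cfA α (n + 1) * cfQ α (n + 1) + cfQ α n

/-- Numerators of convergents, with shifted index: `cfP α 0 = p₋₁ = 1`,
`cfP α 1 = p₀ = ⌊α⌋`, and `cfP α (n+1) = pₙ` where `pₙ = aₙ p_{n-1} + p_{n-2}`. -/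
noncomputable def cfP (α : ℝ) : ℕ → ℤ
  | 0 => 1
  | 1 => ⌊α⌋
  | n + 2 => cfA α (n + 1) * cfP α (n + 1) + cfP α n

/-- `qₙ`, the denominator of the `n`-th convergent of `α`. -/
noncomputable def cfDen (α : ℝ) (n : ℕ) : ℤ := cfQ α (n + 1)

/-- `pₙ`, the numerator of the `n`-th convergent of `α`. -/
noncomputable def cfNum (α : ℝ) (n : ℕ) : ℤ := cfP α (n + 1)

/-- `ξₙ = |qₙ α − pₙ|`. -/
noncomputable def cfXi (α : ℝ) (n : ℕ) : ℝ := |(cfDen α n : ℝ) * α - (cfNum α n : ℝ)|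

/-- `ψ_α(t) = min { ‖qα‖ : q ∈ ℤ, 1 ≤ q ≤ t }`. -/
noncomputable def psiFn (α t : ℝ) : ℝ :=
  sInf {x : ℝ | ∃ p q : ℤ, 1 ≤ q ∧ (q : ℝ) ≤ t ∧ x = |(q : ℝ) * α - (p : ℝ)|}

/-- `ψ_α^[2](t)`: the same minimum but over pairs `(p,q)` that are not `(pₙ,qₙ)` for any `n ≥ 0`. -/
noncomputable def psi2Fn (α t : ℝ) : ℝ :=
  sInf {x : ℝ | ∃ p q : ℤ, 1 ≤ q ∧ (q : ℝ) ≤ t ∧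
    (∀ n : ℕ, ¬(p = cfNum α n ∧ q = cfDen α n)) ∧ x = |(q : ℝ) * α - (p : ℝ)|}

/-- `ψ_α^[2]*(t)`: the same minimum but over pairs `(p,q)` with `p/q ≠ pₙ/qₙ` for all `n ≥ 0`. -/
noncomputable def psi2sFn (α t : ℝ) : ℝ :=
  sInf {x : ℝ | ∃ p q : ℤ, 1 ≤ q ∧ (q : ℝ) ≤ t ∧
    (∀ n : ℕ, (p : ℝ) / (q : ℝ) ≠ (cfNum α n : ℝ) / (cfDen α n : ℝ)) ∧
    x = |(q : ℝ) * α - (p : ℝ)|}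

/-- `λ(α) = liminf_{t→∞} t · ψ_α(t)`. -/
noncomputable def lamOf (α : ℝ) : ℝ := Filter.liminf (fun t : ℝ => t * psiFn α t) Filter.atTop

/-- `𝔨(α) = liminf_{t→∞} t · ψ_α^[2](t)`. -/
noncomputable def kOf (α : ℝ) : ℝ := Filter.liminf (fun t : ℝ => t * psi2Fn α t) Filter.atTop

/-- `𝔨*(α) = liminf_{t→∞} t · ψ_α^[2]*(t)`. -/
noncomputable def ksOf (α : ℝ) : ℝ := Filter.liminf (fun t : ℝ => t * psi2sFn α t) Filter.atTop

/-- `α` and `β` are equivalent: `β = (aα+b)/(cα+d)` with `a,b,c,d ∈ ℤ`, `|ad − bc| = 1`. -/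
def CFEquiv (α β : ℝ) : Prop :=
  ∃ a b c d : ℤ, |a * d - b * c| = 1 ∧ β = ((a : ℝ) * α + (b : ℝ)) / ((c : ℝ) * α + (d : ℝ))

/-- The spectrum `𝕃₂ = {𝔨(α) : α irrational}`. -/
def L2 : Set ℝ := {x : ℝ | ∃ α : ℝ, Irrational α ∧ kOf α = x}

/-- The spectrum `𝕃₂* = {𝔨*(α) : α irrational}`. -/
def L2s : Set ℝ := {x : ℝ | ∃ α : ℝ, Irrational α ∧ ksOf α = x}

/-- `𝔔(α)`: the set of positive integers at which `ψ_α^[2]` is discontinuous. -/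
def QSet (α : ℝ) : Set ℤ := {m : ℤ | 0 < m ∧ ¬ ContinuousAt (psi2Fn α) (m : ℝ)}

/-- `𝔛(α)`: the set of positive integers at which `ψ_α^[2]*` is discontinuous. -/
def XSet (α : ℝ) : Set ℤ := {m : ℤ | 0 < m ∧ ¬ ContinuousAt (psi2sFn α) (m : ℝ)}

/-- The members of the list `l` are successive elements of `S`: they belong to `S`,
are listed in increasing order, and no element of `S` lies strictly between
consecutive listed ones. -/
def SuccessiveIn (S : Set ℤ) (l : List ℤ) : Prop :=
  (∀ x ∈ l, x ∈ S) ∧ l.Chain' (fun x y => x < y ∧ ∀ z ∈ S, ¬(x < z ∧ z < y))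

/-- `κ¹ₙ = (q_{n-2} + q_{n-1})(ξ_{n-2} − ξ_{n-1})`. -/
noncomputable def kap1 (α : ℝ) (n : ℕ) : ℝ :=
  ((cfDen α (n - 2) + cfDen α (n - 1) : ℤ) : ℝ) * (cfXi α (n - 2) - cfXi α (n - 1))

/-- `κ²ₙ = (qₙ − q_{n-1})(ξ_{n-1} + ξₙ)`. -/
noncomputable def kap2 (α : ℝ) (n : ℕ) : ℝ :=
  ((cfDen α n - cfDen α (n - 1) : ℤ) : ℝ) * (cfXi α (n - 1) + cfXi α n)

/-- `κ³ₙ = (2q_{n-2} + q_{n-1})(2ξ_{n-2} − ξ_{n-1})`. -/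
noncomputable def kap3 (α : ℝ) (n : ℕ) : ℝ :=
  ((2 * cfDen α (n - 2) + cfDen α (n - 1) : ℤ) : ℝ) * (2 * cfXi α (n - 2) - cfXi α (n - 1))

/-- `κ⁴ₙ = 4 q_{n-1} ξ_{n-1}`. -/
noncomputable def kap4 (α : ℝ) (n : ℕ) : ℝ :=
  ((4 * cfDen α (n - 1) : ℤ) : ℝ) * cfXi α (n - 1)

/-!
Write a lattice point as `(p, q) = u (pₙ, qₙ) + v (pₙ₋₁, qₙ₋₁)`, which is possible since
`pₙ qₙ₋₁ - pₙ₋₁ qₙ = ±1`; then `|qα - p| = |u ξₙ - v ξₙ₋₁|` because the errors `qⱼα - pⱼ`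
alternate in sign. The hypotheses give `qₙ > 2 qₙ₋₁` and `ξₙ₋₁ = ξₙ + ξₙ₊₁ ∈ [ξₙ, 2ξₙ]`, and
then among the non-convergent points with `1 ≤ q ≤ 2qₙ₋₁ + qₙ` only `(u, v) = (1, -1)` and
`(1, 2)` have `|qα - p| < 2ξₙ₋₁`. So `ψ^[2] ≥ 2ξₙ₋₁` before `qₙ - qₙ₋₁`, `ψ^[2] = ξₙ₋₁ + ξₙ`
on `[qₙ - qₙ₋₁, 2qₙ₋₁ + qₙ)`, and `ψ^[2] ≤ 2ξₙ₋₁ - ξₙ < ξₙ₋₁ + ξₙ` at `2qₙ₋₁ + qₙ`.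
In the lemmas the index `k` plays the role of `n - 1`.
-/

lemma Irrational.fract_pos {x : ℝ} (h : Irrational x) : 0 < Int.fract x :=
  Int.fract_pos.mpr (h.ne_int _)

lemma irrational_gaussIter {α : ℝ} (hα : Irrational α) : ∀ k, Irrational (gaussIter α k)
  | 0 => hα
  | k + 1 => ((irrational_gaussIter hα k).sub_intCast _).inv

section ContinuedFraction

variable {α : ℝ}

lemma fract_gaussIter_succ (k : ℕ) :
    Int.fract (gaussIter α (k + 1)) = (Int.fract (gaussIter α k))⁻¹ - cfA α (k + 1) :=
  rfl

lemma one_le_cfA (hα : Irrational α) (k : ℕ) : 1 ≤ cfA α (k + 1) := by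
  have hf := (irrational_gaussIter hα k).fract_pos
  exact Int.le_floor.mpr (by exact_mod_cast (one_le_inv₀ hf).mpr (Int.fract_lt_one _).le)

lemma cfDen_add_two (k : ℕ) : cfDen α (k + 2) = cfA α (k + 2) * cfDen α (k + 1) + cfDen α k :=
  rfl

lemma cfNum_add_two (k : ℕ) : cfNum α (k + 2) = cfA α (k + 2) * cfNum α (k + 1) + cfNum α k :=
  rfl

lemma one_le_cfDen (hα : Irrational α) : ∀ k, 1 ≤ cfDen α k
  | 0 => by simp [cfDen, cfQ]
  | 1 => by simpa [cfDen, cfQ] using one_le_cfA hα 0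
  | k + 2 => by
    rw [cfDen_add_two]
    nlinarith [one_le_cfA hα (k + 1), one_le_cfDen hα (k + 1), one_le_cfDen hα k]

lemma cfDen_add_le (hα : Irrational α) (k : ℕ) : cfDen α (k + 1) + cfDen α k ≤ cfDen α (k + 2) := by
  rw [cfDen_add_two]
  nlinarith [one_le_cfA hα (k + 1), one_le_cfDen hα (k + 1)]

lemma cfDen_mono (hα : Irrational α) : Monotone (cfDen α) := by
  refine monotone_nat_of_le_succ fun k => ?_
  cases k with
  | zero => simpa [cfDen, cfQ] using one_le_cfDen hα 1
  | succ k => linarith [cfDen_add_le hα k, one_le_cfDen hα k]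

lemma cfNum_mul_cfDen_sub :
    ∀ j, cfNum α (j + 1) * cfDen α j - cfNum α j * cfDen α (j + 1) = (-1) ^ j
  | 0 => by
    simp only [cfNum, cfDen, cfP, cfQ]
    ring
  | j + 1 => by
    rw [cfNum_add_two, cfDen_add_two, pow_succ, ← cfNum_mul_cfDen_sub j]
    ring

lemma exists_eq_comb_cfNum_cfDen (j : ℕ) (p q : ℤ) :
    ∃ u v : ℤ,
      p = u * cfNum α (j + 1) + v * cfNum α j ∧ q = u * cfDen α (j + 1) + v * cfDen α j := by
  have hdet := cfNum_mul_cfDen_sub (α := α) j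
  have hsq : ((-1 : ℤ) ^ j) * (-1) ^ j = 1 := by rw [← mul_pow]; simp
  refine ⟨(-1) ^ j * (p * cfDen α j - q * cfNum α j),
    (-1) ^ j * (q * cfNum α (j + 1) - p * cfDen α (j + 1)), ?_, ?_⟩
  · linear_combination (-p) * hsq + (-(-1) ^ j * p) * hdet
  · linear_combination (-q) * hsq + (-(-1) ^ j * q) * hdet

noncomputable def cfErr (α : ℝ) (j : ℕ) : ℝ := cfDen α j * α - cfNum α j

lemma cfErr_add_two (j : ℕ) : cfErr α (j + 2) = cfA α (j + 2) * cfErr α (j + 1) + cfErr α j := by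
  simp only [cfErr, cfDen_add_two, cfNum_add_two]
  push_cast
  ring

lemma cfErr_zero : cfErr α 0 = Int.fract α := by
  simp [cfErr, cfDen, cfNum, cfQ, cfP, ← Int.self_sub_floor]

lemma cfErr_one : cfErr α 1 = cfA α 1 * Int.fract α - 1 := by
  simp only [cfErr, cfDen, cfNum, cfQ, cfP, ← Int.self_sub_floor]
  push_cast
  ring

lemma cfErr_succ (hα : Irrational α) (j : ℕ) :
    cfErr α (j + 1) = -Int.fract (gaussIter α (j + 1)) * cfErr α j := by
  induction j with
  | zero =>
    have hf : Int.fract α ≠ 0 := hα.fract_pos.ne'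
    rw [cfErr_one, cfErr_zero, zero_add, fract_gaussIter_succ]
    simp only [gaussIter]
    field_simp
    ring
  | succ j ih =>
    have hf := (irrational_gaussIter hα (j + 1)).fract_pos
    rw [cfErr_add_two, ih, fract_gaussIter_succ (j + 1)]
    field_simp
    ring

lemma neg_one_pow_mul_cfErr_pos (hα : Irrational α) : ∀ j, 0 < (-1) ^ j * cfErr α j
  | 0 => by simpa [cfErr_zero] using hα.fract_pos
  | j + 1 => by
    rw [cfErr_succ hα, pow_succ]
    have := (irrational_gaussIter hα (j + 1)).fract_pos
    nlinarith [neg_one_pow_mul_cfErr_pos hα j]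

lemma cfXi_eq_neg_one_pow_mul (hα : Irrational α) (j : ℕ) : cfXi α j = (-1) ^ j * cfErr α j := by
  rw [← abs_of_pos (neg_one_pow_mul_cfErr_pos hα j), abs_mul, abs_neg_one_pow, one_mul]
  rfl

lemma cfErr_eq (hα : Irrational α) (j : ℕ) : cfErr α j = (-1) ^ j * cfXi α j := by
  rw [cfXi_eq_neg_one_pow_mul hα, ← mul_assoc, ← mul_pow]
  simp

lemma cfXi_pos (hα : Irrational α) (j : ℕ) : 0 < cfXi α j :=
  cfXi_eq_neg_one_pow_mul hα j ▸ neg_one_pow_mul_cfErr_pos hα j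

lemma cfXi_succ_lt (hα : Irrational α) (j : ℕ) : cfXi α (j + 1) < cfXi α j := by
  have hξ : cfXi α (j + 1) = Int.fract (gaussIter α (j + 1)) * cfXi α j := by
    simp only [cfXi_eq_neg_one_pow_mul hα, cfErr_succ hα, pow_succ]
    ring
  rw [hξ]
  exact mul_lt_of_lt_one_left (cfXi_pos hα j) (Int.fract_lt_one _)

lemma cfXi_eq_cfA_mul_add (hα : Irrational α) (j : ℕ) :
    cfXi α j = cfA α (j + 2) * cfXi α (j + 1) + cfXi α (j + 2) := by
  have h := cfErr_add_two (α := α) j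
  simp only [cfErr_eq hα, pow_succ] at h
  have hs : (-1 : ℝ) ^ j * (-1) ^ j = 1 := by rw [← mul_pow]; simp
  linear_combination
    (-(-1) ^ j) * h - (cfXi α j - cfA α (j + 2) * cfXi α (j + 1) - cfXi α (j + 2)) * hs

lemma abs_comb_cfDen_mul_sub_cfNum (hα : Irrational α) (j : ℕ) (u v : ℤ) :
    |((u * cfDen α (j + 1) + v * cfDen α j : ℤ) : ℝ) * α
        - (u * cfNum α (j + 1) + v * cfNum α j : ℤ)| = |u * cfXi α (j + 1) - v * cfXi α j| := by
  have h : ((u * cfDen α (j + 1) + v * cfDen α j : ℤ) : ℝ) * α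
      - (u * cfNum α (j + 1) + v * cfNum α j : ℤ) = u * cfErr α (j + 1) + v * cfErr α j := by
    simp only [cfErr]
    push_cast
    ring
  rw [h, cfErr_eq hα, cfErr_eq hα, pow_succ,
    show (u : ℝ) * ((-1) ^ j * -1 * cfXi α (j + 1)) + v * ((-1) ^ j * cfXi α j)
      = -(-1) ^ j * (u * cfXi α (j + 1) - v * cfXi α j) by ring,
    abs_mul, abs_neg, abs_neg_one_pow, one_mul]

lemma exists_forall_not_convergent_of_den_one (hα : Irrational α) :
    ∃ p : ℤ, ∀ j, ¬(p = cfNum α j ∧ (1 : ℤ) = cfDen α j) := by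
  refine ⟨|cfNum α 0| + |cfNum α 1| + 1, fun j ⟨hp, hq⟩ => ?_⟩
  have h0 := le_abs_self (cfNum α 0)
  have h1 := le_abs_self (cfNum α 1)
  have := abs_nonneg (cfNum α 0)
  have := abs_nonneg (cfNum α 1)
  match j with
  | 0 => omega
  | 1 => omega
  | k + 2 => linarith [cfDen_add_le hα k, one_le_cfDen hα k, one_le_cfDen hα (k + 1)]

/-- Applied with `Q = qₙ`, `Q' = qₙ₋₁`, `η = ξₙ`, `ξ = ξₙ₋₁`: the five exceptional `(u, v)` are
the convergents `n - 1`, `n`, `n + 1` and the two points of the theorem. -/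
lemma lattice_classify {Q Q' u v : ℤ} {ξ η : ℝ} (hQ' : 0 < Q') (hQ : 2 * Q' < Q)
    (hq₁ : 1 ≤ u * Q + v * Q') (hq₂ : u * Q + v * Q' ≤ 2 * Q' + Q)
    (hη : 0 ≤ η) (hηξ : η ≤ ξ) (hξη : ξ ≤ 2 * η) :
    (u = 0 ∧ v = 1) ∨ (u = 1 ∧ -1 ≤ v ∧ v ≤ 2) ∨ 2 * ξ ≤ |u * η - v * ξ| := by
  rcases le_or_gt u 0 with hu | hu
  · have hv : 1 ≤ v := by nlinarith
    obtain h | hv2 : u = 0 ∧ v = 1 ∨ 2 ≤ v := by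
      rcases hu.lt_or_eq with hu | rfl
      · right; nlinarith
      · omega
    · exact Or.inl h
    have hu' : (u : ℝ) ≤ 0 := by exact_mod_cast hu
    have hv' : (2 : ℝ) ≤ v := by exact_mod_cast hv2
    refine Or.inr (Or.inr (le_abs.mpr (Or.inr ?_)))
    nlinarith
  obtain rfl | hu2 := (Int.add_one_le_iff.mpr hu).eq_or_lt
  · rcases lt_or_ge v (-1) with hv | hv
    · have hv' : (v : ℝ) ≤ -2 := by exact_mod_cast Int.le_sub_one_iff.mpr hv
      refine Or.inr (Or.inr (le_abs.mpr (Or.inl ?_)))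
      push_cast
      nlinarith
    rcases le_or_gt v 2 with hv2 | hv2
    · exact Or.inr (Or.inl ⟨rfl, hv, hv2⟩)
    have hv' : (3 : ℝ) ≤ v := by exact_mod_cast hv2
    refine Or.inr (Or.inr (le_abs.mpr (Or.inr ?_)))
    push_cast
    nlinarith
  · have hv : v ≤ -1 := by nlinarith
    have hu' : (2 : ℝ) ≤ u := by exact_mod_cast hu2
    have hv' : (v : ℝ) ≤ -1 := by exact_mod_cast hv
    refine Or.inr (Or.inr (le_abs.mpr (Or.inl ?_)))
    nlinarith

lemma two_mul_cfDen_lt (hα : Irrational α) (k : ℕ) (ha : 2 ≤ cfA α (k + 2)) :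
    2 * cfDen α (k + 1) < cfDen α (k + 2) := by
  rw [cfDen_add_two]
  nlinarith [one_le_cfDen hα k, one_le_cfDen hα (k + 1)]

lemma cfXi_eq_add_of_cfA_eq_one (hα : Irrational α) {k : ℕ} (ha' : cfA α (k + 2) = 1) :
    cfXi α k = cfXi α (k + 1) + cfXi α (k + 2) := by
  simpa [ha'] using cfXi_eq_cfA_mul_add hα k

lemma cfDen_ne_sub (hα : Irrational α) {k : ℕ} (hQ : 2 * cfDen α k < cfDen α (k + 1)) (j : ℕ) :
    cfDen α j ≠ cfDen α (k + 1) - cfDen α k := by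
  have := one_le_cfDen hα k
  rcases le_or_gt j k with h | h
  · have := cfDen_mono hα h
    omega
  · have := cfDen_mono hα (show k + 1 ≤ j from h)
    omega

lemma cfDen_ne_two_mul_add (hα : Irrational α) {k : ℕ} (hQ : 2 * cfDen α k < cfDen α (k + 1))
    (ha' : cfA α (k + 2) = 1) (j : ℕ) : cfDen α j ≠ 2 * cfDen α k + cfDen α (k + 1) := by
  have h₂ : cfDen α (k + 2) = cfDen α (k + 1) + cfDen α k := by rw [cfDen_add_two, ha', one_mul]
  have := one_le_cfDen hα k
  rcases le_or_gt j (k + 2) with h | h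
  · have := cfDen_mono hα h
    omega
  · have := cfDen_mono hα (show k + 3 ≤ j from h)
    have : cfDen α (k + 2) + cfDen α (k + 1) ≤ cfDen α (k + 3) := cfDen_add_le hα (k + 1)
    omega

lemma abs_sub_cfDen_mul_sub_cfNum (hα : Irrational α) (k : ℕ) :
    |((cfDen α (k + 1) - cfDen α k : ℤ) : ℝ) * α - (cfNum α (k + 1) - cfNum α k : ℤ)|
      = cfXi α k + cfXi α (k + 1) := by
  have h := abs_comb_cfDen_mul_sub_cfNum hα k 1 (-1)
  simp only [one_mul, neg_one_mul, ← sub_eq_add_neg, Int.cast_one, Int.cast_neg,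
    sub_neg_eq_add] at h
  rw [h, add_comm, abs_of_pos (by linarith [cfXi_pos hα k, cfXi_pos hα (k + 1)])]

lemma abs_two_mul_cfDen_add_mul_sub_cfNum (hα : Irrational α) (k : ℕ) :
    |((2 * cfDen α k + cfDen α (k + 1) : ℤ) : ℝ) * α - (2 * cfNum α k + cfNum α (k + 1) : ℤ)|
      = 2 * cfXi α k - cfXi α (k + 1) := by
  have h := abs_comb_cfDen_mul_sub_cfNum hα k 1 2
  rw [add_comm (2 * cfDen α k), add_comm (2 * cfNum α k)]
  simp only [one_mul, Int.cast_one, Int.cast_ofNat] at h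
  rw [h, abs_sub_comm, abs_of_pos (by linarith [cfXi_pos hα k, cfXi_succ_lt hα k])]

lemma not_convergent_classify (hα : Irrational α) {k : ℕ} (hQ : 2 * cfDen α k < cfDen α (k + 1))
    (ha' : cfA α (k + 2) = 1) {p q : ℤ} (hq₁ : 1 ≤ q) (hq₂ : q ≤ 2 * cfDen α k + cfDen α (k + 1))
    (hpq : ∀ j, ¬(p = cfNum α j ∧ q = cfDen α j)) :
    (p = cfNum α (k + 1) - cfNum α k ∧ q = cfDen α (k + 1) - cfDen α k) ∨
    (p = 2 * cfNum α k + cfNum α (k + 1) ∧ q = 2 * cfDen α k + cfDen α (k + 1)) ∨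
    2 * cfXi α k ≤ |q * α - p| := by
  obtain ⟨u, v, rfl, rfl⟩ := exists_eq_comb_cfNum_cfDen (α := α) k p q
  have hξ := cfXi_eq_add_of_cfA_eq_one hα ha'
  have := cfXi_succ_lt hα (k + 1)
  have := cfXi_pos hα (k + 2)
  rcases lattice_classify (ξ := cfXi α k) (η := cfXi α (k + 1)) (one_le_cfDen hα k) hQ hq₁ hq₂
    (cfXi_pos hα (k + 1)).le (by linarith) (by linarith) with ⟨rfl, rfl⟩ | ⟨rfl, hv₁, hv₂⟩ | h
  · exact absurd ⟨by ring, by ring⟩ (hpq k)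
  · interval_cases v
    · exact Or.inl ⟨by ring, by ring⟩
    · exact absurd ⟨by ring, by ring⟩ (hpq (k + 1))
    · refine absurd ⟨?_, ?_⟩ (hpq (k + 2))
      · rw [cfNum_add_two, ha']; ring
      · rw [cfDen_add_two, ha']; ring
    · exact Or.inr (Or.inl ⟨by ring, by ring⟩)
  · rw [abs_comb_cfDen_mul_sub_cfNum hα]
    exact Or.inr (Or.inr h)

end ContinuedFraction

lemma psi2Fn_le {α t : ℝ} {p q : ℤ} (hq : 1 ≤ q) (hqt : (q : ℝ) ≤ t)
    (hpq : ∀ j, ¬(p = cfNum α j ∧ q = cfDen α j)) : psi2Fn α t ≤ |q * α - p| :=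
  csInf_le ⟨0, by rintro _ ⟨_, _, _, _, _, rfl⟩; exact abs_nonneg _⟩ ⟨p, q, hq, hqt, hpq, rfl⟩

lemma le_psi2Fn {α t c : ℝ} (hα : Irrational α) (ht : 1 ≤ t)
    (h : ∀ p q : ℤ, 1 ≤ q → (q : ℝ) ≤ t → (∀ j, ¬(p = cfNum α j ∧ q = cfDen α j)) →
      c ≤ |q * α - p|) :
    c ≤ psi2Fn α t := by
  obtain ⟨p, hp⟩ := exists_forall_not_convergent_of_den_one hα
  refine le_csInf ⟨_, p, 1, le_rfl, by exact_mod_cast ht, hp, rfl⟩ ?_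
  rintro _ ⟨p, q, hq, hqt, hpq, rfl⟩
  exact h p q hq hqt hpq

lemma not_continuousAt_of_forall_Ioo_le {X Y : Type*} [TopologicalSpace X] [LinearOrder X]
    [OrderTopology X] [DenselyOrdered X] [NoMinOrder X] [TopologicalSpace Y] [LinearOrder Y]
    [OrderClosedTopology Y] {f : X → Y} {a x : X} {c : Y} (hax : a < x)
    (hf : ∀ t ∈ Ioo a x, c ≤ f t) (hx : f x < c) : ¬ContinuousAt f x := fun h =>
  hx.not_ge <| ge_of_tendsto (h.tendsto.mono_left nhdsWithin_le_nhds)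
    (eventually_of_mem (Ioo_mem_nhdsLT hax) hf)

section Psi2

variable {α : ℝ} {k : ℕ}

lemma psi2Fn_eq_of_mem_Ico (hα : Irrational α) (hQ : 2 * cfDen α k < cfDen α (k + 1))
    (ha' : cfA α (k + 2) = 1) {t : ℝ}
    (ht : t ∈ Ico ((cfDen α (k + 1) - cfDen α k : ℤ) : ℝ)
      ((2 * cfDen α k + cfDen α (k + 1) : ℤ) : ℝ)) :
    psi2Fn α t = cfXi α k + cfXi α (k + 1) := by
  have h₀ := one_le_cfDen hα k
  refine le_antisymm ?_ (le_psi2Fn hα ?_ fun p q hq hqt hpq => ?_)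
  · rw [← abs_sub_cfDen_mul_sub_cfNum hα]
    exact psi2Fn_le (by omega) ht.1 fun j ⟨_, h⟩ => cfDen_ne_sub hα hQ j h.symm
  · exact le_trans (by exact_mod_cast (show (1 : ℤ) ≤ cfDen α (k + 1) - cfDen α k by omega)) ht.1
  · have hqT : q < 2 * cfDen α k + cfDen α (k + 1) := by exact_mod_cast hqt.trans_lt ht.2
    rcases not_convergent_classify hα hQ ha' hq hqT.le hpq with ⟨rfl, rfl⟩ | ⟨-, rfl⟩ | h
    · rw [abs_sub_cfDen_mul_sub_cfNum hα]
    · exact absurd hqT (lt_irrefl _)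
    · linarith [cfXi_succ_lt hα k]

lemma two_mul_cfXi_le_psi2Fn (hα : Irrational α) (hQ : 2 * cfDen α k < cfDen α (k + 1))
    (ha' : cfA α (k + 2) = 1) {t : ℝ} (ht : t ∈ Ico 1 ((cfDen α (k + 1) - cfDen α k : ℤ) : ℝ)) :
    2 * cfXi α k ≤ psi2Fn α t := by
  have h₀ := one_le_cfDen hα k
  refine le_psi2Fn hα ht.1 fun p q hq hqt hpq => ?_
  have hqT : q < cfDen α (k + 1) - cfDen α k := by exact_mod_cast hqt.trans_lt ht.2
  rcases not_convergent_classify hα hQ ha' hq (by omega) hpq with ⟨-, rfl⟩ | ⟨-, rfl⟩ | h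
  · omega
  · omega
  · exact h

lemma psi2Fn_two_mul_cfDen_add_le (hα : Irrational α) (hQ : 2 * cfDen α k < cfDen α (k + 1))
    (ha' : cfA α (k + 2) = 1) :
    psi2Fn α ((2 * cfDen α k + cfDen α (k + 1) : ℤ) : ℝ) ≤ 2 * cfXi α k - cfXi α (k + 1) := by
  rw [← abs_two_mul_cfDen_add_mul_sub_cfNum hα]
  exact psi2Fn_le (by linarith [one_le_cfDen hα k]) le_rfl
    fun j ⟨_, h⟩ => cfDen_ne_two_mul_add hα hQ ha' j h.symm

lemma cfDen_sub_mem_QSet (hα : Irrational α) (hQ : 2 * cfDen α k < cfDen α (k + 1))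
    (ha' : cfA α (k + 2) = 1) : cfDen α (k + 1) - cfDen α k ∈ QSet α := by
  have h₀ := one_le_cfDen hα k
  have h₁ : (1 : ℝ) < ((cfDen α (k + 1) - cfDen α k : ℤ) : ℝ) := by
    exact_mod_cast (show (1 : ℤ) < cfDen α (k + 1) - cfDen α k by omega)
  have h₂ : ((cfDen α (k + 1) - cfDen α k : ℤ) : ℝ) <
      ((2 * cfDen α k + cfDen α (k + 1) : ℤ) : ℝ) := Int.cast_lt.mpr (by omega)
  refine ⟨by omega, not_continuousAt_of_forall_Ioo_le h₁
    (fun t ht => two_mul_cfXi_le_psi2Fn hα hQ ha' ⟨ht.1.le, ht.2⟩) ?_⟩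
  rw [psi2Fn_eq_of_mem_Ico hα hQ ha' ⟨le_rfl, h₂⟩]
  linarith [cfXi_succ_lt hα k]

lemma two_mul_cfDen_add_mem_QSet (hα : Irrational α) (hQ : 2 * cfDen α k < cfDen α (k + 1))
    (ha' : cfA α (k + 2) = 1) : 2 * cfDen α k + cfDen α (k + 1) ∈ QSet α := by
  have h₀ := one_le_cfDen hα k
  have h₂ : ((cfDen α (k + 1) - cfDen α k : ℤ) : ℝ) <
      ((2 * cfDen α k + cfDen α (k + 1) : ℤ) : ℝ) := Int.cast_lt.mpr (by omega)
  refine ⟨by omega, not_continuousAt_of_forall_Ioo_le h₂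
    (fun t ht => (psi2Fn_eq_of_mem_Ico hα hQ ha' ⟨ht.1.le, ht.2⟩).ge)
    ((psi2Fn_two_mul_cfDen_add_le hα hQ ha').trans_lt ?_)⟩
  linarith [cfXi_eq_add_of_cfA_eq_one hα ha', cfXi_succ_lt hα (k + 1)]

lemma continuousAt_psi2Fn_of_mem_Ioo (hα : Irrational α) (hQ : 2 * cfDen α k < cfDen α (k + 1))
    (ha' : cfA α (k + 2) = 1) {z : ℝ}
    (hz : z ∈ Ioo ((cfDen α (k + 1) - cfDen α k : ℤ) : ℝ)
      ((2 * cfDen α k + cfDen α (k + 1) : ℤ) : ℝ)) :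
    ContinuousAt (psi2Fn α) z :=
  continuousAt_const.congr <| eventuallyEq_of_mem (Ioo_mem_nhds hz.1 hz.2) fun _ ht =>
    (psi2Fn_eq_of_mem_Ico hα hQ ha' (Ioo_subset_Ico_self ht)).symm

end Psi2

theorem stmt13_general (α : ℝ) (hα : Irrational α)
    (n : ℕ) (hn : 3 ≤ n) (ha : 2 ≤ cfA α n) (ha' : cfA α (n + 1) = 1) :
    SuccessiveIn (QSet α)
      [cfDen α n - cfDen α (n - 1), 2 * cfDen α (n - 1) + cfDen α n] := by
  obtain ⟨k, rfl⟩ : ∃ k, n = k + 2 := ⟨n - 2, by omega⟩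
  rw [show k + 2 - 1 = k + 1 from rfl]
  have hQ : 2 * cfDen α (k + 1) < cfDen α (k + 1 + 1) := two_mul_cfDen_lt hα k ha
  refine ⟨?_, List.isChain_pair.mpr ⟨?_, fun z hz ⟨hz₁, hz₂⟩ => hz.2 ?_⟩⟩
  · simpa using ⟨cfDen_sub_mem_QSet hα hQ ha', two_mul_cfDen_add_mem_QSet hα hQ ha'⟩
  · linarith [one_le_cfDen hα (k + 1)]
  · exact continuousAt_psi2Fn_of_mem_Ioo hα hQ ha' ⟨by exact_mod_cast hz₁, by exact_mod_cast hz₂⟩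

/-- Let `α ∈ (0,1)` be irrational, `n ≥ 3`, `aₙ ≥ 2` and `a_{n+1} = 1`.
Then `qₙ − q_{n-1}` and `2q_{n-1} + qₙ` are two successive elements of `𝔔(α)`. -/
theorem stmt13 (α : ℝ) (hα : Irrational α) (h0 : 0 < α) (h1 : α < 1)
    (n : ℕ) (hn : 3 ≤ n) (ha : 2 ≤ cfA α n) (ha' : cfA α (n + 1) = 1) :
    SuccessiveIn (QSet α)
      [cfDen α n - cfDen α (n - 1), 2 * cfDen α (n - 1) + cfDen α n] :=
  stmt13_general α hα n hn ha ha'
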